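/- The space of totally real 3-planes 𝕐 = {P ∈ G(3, ℝ⁶) : P ∩ J(P) = {0}} is path-connected, where J is the standard complex structure on ℝ⁶ = ℂ³. -/

import Mathlib

/-! A real 3-plane is totally real exactly when a real basis of it is a complex basis of `ℂ³`,
so the totally real planes are the real column spans of the matrices in `GL₃(ℂ)`. This group is
path-connected, since the complex line through two invertible matrices meets the singular ones in
finitely many points, and the column span depends continuously on the matrix because the
orthogonal projection onto the range of an injective `T` is `T (T* T)⁻¹ T*`. -/

/-- `ℂ³` as a (real) inner product space, identified with `ℝ⁶`. -/
noncomputable abbrev E3 : Type := EuclideanSpace ℂ (Fin 3)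

/-- The standard complex structure `J` on `ℝ⁶ = ℂ³`: multiplication by `i`,
viewed as a real-linear map. -/
noncomputable def J : E3 →ₗ[ℝ] E3 := (LinearMap.lsmul ℂ E3 Complex.I).restrictScalars ℝ

/-- The Grassmannian `G(3, ℝ⁶)` of real 3-dimensional subspaces of `ℝ⁶ ≅ ℂ³`. -/
def Gr3 : Type := {P : Submodule ℝ E3 // Module.finrank ℝ P = 3}

/-- The orthogonal projection onto a subspace, as a point of the space of
real-linear endomorphisms of `ℝ⁶`. -/
noncomputable def projOf (P : Submodule ℝ E3) : E3 →L[ℝ] E3 :=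
  P.subtypeL.comp (P.orthogonalProjectionOnto)

/-- The standard topology on the Grassmannian, induced by the embedding sending a
plane to the orthogonal projection onto it. -/
noncomputable instance : TopologicalSpace Gr3 :=
  TopologicalSpace.induced (fun P => projOf P.1) inferInstance

open Function Submodule Set

namespace ContinuousLinearMap

variable {𝕜 E F : Type*} [RCLike 𝕜] [NormedAddCommGroup E] [InnerProductSpace 𝕜 E]
  [CompleteSpace E] [NormedAddCommGroup F] [InnerProductSpace 𝕜 F] [CompleteSpace F]
  [FiniteDimensional 𝕜 F]

theorem isUnit_adjoint_comp_self {T : F →L[𝕜] E} (hT : Injective T) :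
    IsUnit (adjoint T ∘L T) := by
  have hinj : Injective (adjoint T ∘L T) := by
    refine (injective_iff_map_eq_zero _).2 fun x hx => hT ?_
    rw [map_zero, ← inner_self_eq_zero (𝕜 := 𝕜), ← adjoint_inner_left]
    simp_all
  exact ⟨(LinearEquiv.ofInjectiveEndo _ hinj).toContinuousLinearEquiv.toUnit, rfl⟩

theorem starProjection_range {T : F →L[𝕜] E} (hT : Injective T) :
    (LinearMap.range (T : F →ₗ[𝕜] E)).starProjection =
      T ∘L Ring.inverse (adjoint T ∘L T) ∘L adjoint T := by
  ext x
  refine Submodule.eq_starProjection_of_mem_of_inner_eq_zero ⟨_, rfl⟩ ?_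
  rintro _ ⟨c, rfl⟩
  have hG : (adjoint T ∘L T) * Ring.inverse (adjoint T ∘L T) = 1 :=
    Ring.mul_inverse_cancel _ (isUnit_adjoint_comp_self hT)
  have : adjoint T (T (Ring.inverse (adjoint T ∘L T) (adjoint T x))) = adjoint T x :=
    congr($hG (adjoint T x))
  change inner 𝕜 _ (T c) = 0
  rw [← adjoint_inner_left, map_sub]
  simp [this]

theorem continuousOn_starProjection_range :
    ContinuousOn (fun T : F →L[𝕜] E => (LinearMap.range (T : F →ₗ[𝕜] E)).starProjection)
      {T | Injective T} := by
  have hadj : Continuous (adjoint : (F →L[𝕜] E) → E →L[𝕜] F) :=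
    (adjoint : (F →L[𝕜] E) ≃ₗᵢ⋆[𝕜] (E →L[𝕜] F)).continuous
  have hinv : ContinuousOn (fun T : F →L[𝕜] E => Ring.inverse (adjoint T ∘L T))
      {T | Injective T} :=
    fun T hT => by
      have hT' := NormedRing.inverse_continuousAt (isUnit_adjoint_comp_self hT).unit
      rw [IsUnit.unit_spec] at hT'
      exact (hT'.comp (f := fun S : F →L[𝕜] E => adjoint S ∘L S)
        (hadj.clm_comp continuous_id).continuousAt).continuousWithinAt
  refine (continuousOn_id.clm_comp (hinv.clm_comp hadj.continuousOn)).congr fun T hT => ?_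
  exact starProjection_range hT

end ContinuousLinearMap

section ComplexStructure

variable {ι V : Type*} [Fintype ι] [AddCommGroup V] [Module ℝ V] [Module ℂ V]
  [IsScalarTower ℝ ℂ V]

theorem Complex.sum_smul_eq_re_add_I_smul_im (g : ι → ℂ) (v : ι → V) :
    ∑ i, g i • v i = ∑ i, (g i).re • v i + Complex.I • ∑ i, (g i).im • v i := by
  rw [Finset.smul_sum, ← Finset.sum_add_distrib]
  refine Finset.sum_congr rfl fun i _ => ?_
  rw [← algebraMap_smul ℂ (g i).re, ← algebraMap_smul ℂ (g i).im, smul_smul, ← add_smul,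
    Complex.coe_algebraMap, mul_comm, Complex.re_add_im]

theorem linearIndependent_complex_iff {v : ι → V} :
    LinearIndependent ℂ v ↔ LinearIndependent ℝ v ∧ span ℝ (range v) ⊓
      (span ℝ (range v)).map ((LinearMap.lsmul ℂ V Complex.I).restrictScalars ℝ) = ⊥ := by
  constructor
  · intro hv
    refine ⟨hv.restrict_scalars' ℝ, (Submodule.eq_bot_iff _).2 ?_⟩
    rintro x ⟨hx, y, hy, hyx⟩
    obtain ⟨a, rfl⟩ := mem_span_range_iff_exists_fun ℝ |>.1 hx
    obtain ⟨b, rfl⟩ := mem_span_range_iff_exists_fun ℝ |>.1 hy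
    have hsum : ∑ i, ((a i : ℂ) - Complex.I * b i) • v i = 0 := by
      rw [Complex.sum_smul_eq_re_add_I_smul_im]
      simp [← hyx, Finset.smul_sum, smul_comm _ Complex.I]
    have ha : ∀ i, a i = 0 := fun i => by
      simpa using congr(Complex.re $(Fintype.linearIndependent_iff.1 hv _ hsum i))
    simp [ha]
  · rintro ⟨hv, hJ⟩
    refine Fintype.linearIndependent_iff.2 fun g hg i => ?_
    rw [Complex.sum_smul_eq_re_add_I_smul_im] at hg
    set x := ∑ i, (g i).re • v i
    set y := ∑ i, (g i).im • v i
    have hxW : x ∈ span ℝ (range v) := sum_mem fun i _ => smul_mem _ _ (subset_span ⟨i, rfl⟩)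
    have hyW : y ∈ span ℝ (range v) := sum_mem fun i _ => smul_mem _ _ (subset_span ⟨i, rfl⟩)
    have hx : x = 0 := by
      refine (Submodule.eq_bot_iff _).1 hJ x ⟨hxW, -y, neg_mem hyW, ?_⟩
      simp [eq_neg_of_add_eq_zero_left hg]
    have hy : y = 0 := by
      simpa [hx, Complex.I_ne_zero] using hg
    exact Complex.ext (Fintype.linearIndependent_iff.1 hv _ hx i)
      (Fintype.linearIndependent_iff.1 hv _ hy i)

end ComplexStructure

namespace Matrix

variable {ι : Type*} [Fintype ι]

open Polynomial in
theorem joinedIn_setOf_isUnit [DecidableEq ι] {A B : Matrix ι ι ℂ} (hA : IsUnit A) (hB : IsUnit B) :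
    JoinedIn {M : Matrix ι ι ℂ | IsUnit M} A B := by
  set line : ℂ → Matrix ι ι ℂ := fun z => A + z • (B - A)
  set p : ℂ[X] := det (A.map C + (X : ℂ[X]) • (B - A).map C)
  have hp : ∀ z, p.eval z = (line z).det := by
    intro z
    rw [← coe_evalRingHom, RingHom.map_det]
    congr 1
    ext i j
    simp [line]
  have hp0 : p ≠ 0 := fun h =>
    ((isUnit_iff_isUnit_det A).1 hA).ne_zero (by simpa [h, line] using (hp 0).symm)
  have hline : JoinedIn {z : ℂ | p.IsRoot z}ᶜ 0 1 := by
    refine ((p.finite_setOfPred_isRoot hp0).countable.isPathConnected_compl_of_one_lt_rank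
      (by simp [Complex.rank_real_complex])).joinedIn _ ?_ _ ?_
    · simpa [IsRoot, hp, line] using ((isUnit_iff_isUnit_det A).1 hA).ne_zero
    · simpa [IsRoot, hp, line] using ((isUnit_iff_isUnit_det B).1 hB).ne_zero
  have hcont : Continuous line := by fun_prop
  have hunit : line '' {z | p.IsRoot z}ᶜ ⊆ {M | IsUnit M} := by
    rintro _ ⟨z, hz, rfl⟩
    simpa [IsRoot, hp, isUnit_iff_isUnit_det] using hz
  simpa [line] using (hline.map hcont).mono hunit

theorem isPathConnected_setOf_isUnit [DecidableEq ι] :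
    IsPathConnected {M : Matrix ι ι ℂ | IsUnit M} :=
  isPathConnected_iff.2 ⟨⟨1, isUnit_one⟩, fun _ hA _ hB => joinedIn_setOf_isUnit hA hB⟩

noncomputable def euclideanCol (A : Matrix ι ι ℂ) (i : ι) : EuclideanSpace ℂ ι :=
  WithLp.toLp 2 (A.col i)

theorem linearIndependent_euclideanCol_iff [DecidableEq ι] {A : Matrix ι ι ℂ} :
    LinearIndependent ℂ A.euclideanCol ↔ IsUnit A := by
  rw [← linearIndependent_cols_iff_isUnit]
  exact (WithLp.linearEquiv 2 ℂ (ι → ℂ)).symm.toLinearMap.linearIndependent_iff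
    (LinearEquiv.ker _)

noncomputable def realMulVec (A : Matrix ι ι ℂ) : EuclideanSpace ℝ ι →L[ℝ] EuclideanSpace ℂ ι :=
  LinearMap.toContinuousLinearMap <|
    Fintype.linearCombination ℝ A.euclideanCol ∘ₗ (WithLp.linearEquiv 2 ℝ (ι → ℝ)).toLinearMap

theorem range_realMulVec (A : Matrix ι ι ℂ) :
    LinearMap.range (A.realMulVec : EuclideanSpace ℝ ι →ₗ[ℝ] EuclideanSpace ℂ ι) =
      span ℝ (range A.euclideanCol) := by
  simp [realMulVec, LinearMap.range_comp_of_range_eq_top]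

theorem injective_realMulVec_iff {A : Matrix ι ι ℂ} :
    Injective A.realMulVec ↔ LinearIndependent ℝ A.euclideanCol := by
  simp [realMulVec, linearIndependent_iff_injective_fintypeLinearCombination]

theorem realMulVec_apply (A : Matrix ι ι ℂ) (x : EuclideanSpace ℝ ι) :
    A.realMulVec x = ∑ i, x i • A.euclideanCol i := by
  simp [realMulVec, Fintype.linearCombination_apply]

theorem continuous_realMulVec : Continuous (realMulVec : Matrix ι ι ℂ → _) := by
  refine continuous_clm_apply.2 fun x => ?_
  simp only [realMulVec_apply, euclideanCol, col]
  fun_prop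

theorem injective_realMulVec_of_isUnit [DecidableEq ι] {A : Matrix ι ι ℂ} (hA : IsUnit A) :
    Injective A.realMulVec :=
  injective_realMulVec_iff.2
    (linearIndependent_complex_iff.1 (linearIndependent_euclideanCol_iff.2 hA)).1

end Matrix

noncomputable def totallyRealPlane (A : {A : Matrix (Fin 3) (Fin 3) ℂ // IsUnit A}) : Gr3 :=
  ⟨LinearMap.range (A.1.realMulVec : EuclideanSpace ℝ (Fin 3) →ₗ[ℝ] E3), by
    rw [LinearMap.finrank_range_of_inj (Matrix.injective_realMulVec_of_isUnit A.2),
      finrank_euclideanSpace_fin]⟩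

theorem continuous_totallyRealPlane : Continuous totallyRealPlane :=
  continuous_induced_rng.2 <| ContinuousLinearMap.continuousOn_starProjection_range.comp_continuous
    (Matrix.continuous_realMulVec.comp continuous_subtype_val)
    fun A => Matrix.injective_realMulVec_of_isUnit A.2

theorem range_totallyRealPlane :
    range totallyRealPlane = {P : Gr3 | P.1 ⊓ P.1.map J = ⊥} := by
  ext P
  constructor
  · rintro ⟨⟨A, hA⟩, rfl⟩
    simp only [totallyRealPlane, Matrix.range_realMulVec]
    exact (linearIndependent_complex_iff.1 (Matrix.linearIndependent_euclideanCol_iff.2 hA)).2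
  · intro hJ
    let b := Module.finBasisOfFinrankEq ℝ P.1 P.2
    let v : Fin 3 → E3 := P.1.subtype ∘ b
    have hspan : span ℝ (range v) = P.1 := by
      rw [range_comp, span_image, b.span_eq, map_subtype_top]
    have hv : LinearIndependent ℂ v := by
      refine linearIndependent_complex_iff.2
        ⟨b.linearIndependent.map' P.1.subtype P.1.ker_subtype, ?_⟩
      rwa [hspan]
    let A : Matrix (Fin 3) (Fin 3) ℂ := Matrix.of fun j i => v i j
    have hA : A.euclideanCol = v := rfl
    refine ⟨⟨A, Matrix.linearIndependent_euclideanCol_iff.1 (hA ▸ hv)⟩, Subtype.ext ?_⟩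
    simp only [totallyRealPlane, Matrix.range_realMulVec, hA, hspan]

/-- The space `𝕐 = {P ∈ G(3, ℝ⁶) : P ∩ J(P) = {0}}` of totally real 3-planes is
path-connected. -/
theorem stmt_7 :
    IsPathConnected {P : Gr3 | P.1 ⊓ P.1.map J = ⊥} := by
  have : PathConnectedSpace {A : Matrix (Fin 3) (Fin 3) ℂ // IsUnit A} :=
    isPathConnected_iff_pathConnectedSpace.1 Matrix.isPathConnected_setOf_isUnit
  rw [← range_totallyRealPlane]
  exact isPathConnected_range continuous_totallyRealPlane
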